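/- For any language K ⊆ Lm, the set BTC(K) of sublanguages of K that are bounded-time completable with respect to (Lm, Lmi, N) has a unique supremal element under inclusion, namely sup BTC(K) = ⋃{K' ⊆ K | K' is bounded-time completable}, and this union is itself bounded-time completable and contained in K. -/
import Mathlib


open List

attribute [local instance] Classical.propDecidable

/-- Prefix closure of a language. -/
def pclosure {E : Type*} (K : Set (List E)) : Set (List E) := {s | ∃ t, s ++ t ∈ K}

/-- Set of minimal extensions of `s` into `Ki` (equals `{ε}` when `s ∈ Ki`). -/
noncomputable def Mset {E : Type*} (Ki : Set (List E)) (s : List E) : Set (List E) :=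
  if s ∈ Ki then {([] : List E)} else
    {t | s ++ t ∈ Ki ∧ ∀ t', t' <+: t → t' ≠ t → s ++ t' ∉ Ki}

/-- `K` is bounded-time completable w.r.t. `(Lmi, N)` (with `tick` the clock event). -/
def BTComp {E : Type*} [DecidableEq E] (tick : E) (Lmi : Set (List E)) (N : ℕ)
    (K : Set (List E)) : Prop :=
  ∀ s ∈ pclosure K,
    (Mset (K ∩ Lmi) s).Nonempty ∧ ∀ t ∈ Mset (K ∩ Lmi) s, t.count tick ≤ N

lemma exists_min_prefix {E : Type*} (A : Set (List E)) (s t : List E) (ht : s ++ t ∈ A) :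
    ∃ t0, t0 <+: t ∧ s ++ t0 ∈ A ∧ ∀ t', t' <+: t0 → t' ≠ t0 → s ++ t' ∉ A := by
  classical
  have hex : ∃ n, ∃ t0, t0 <+: t ∧ t0.length = n ∧ s ++ t0 ∈ A :=
    ⟨t.length, t, prefix_refl t, rfl, ht⟩
  obtain ⟨t0, hpre, hlen, hA⟩ := Nat.find_spec hex
  refine ⟨t0, hpre, hA, ?_⟩
  intro t' hpre' hne hA'
  have hlt : t'.length < t0.length :=
    lt_of_le_of_ne hpre'.length_le (fun h => hne (hpre'.eq_of_length h))
  exact Nat.find_min hex (by omega) ⟨t', hpre'.trans hpre, rfl, hA'⟩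

theorem supBTC_supremal {E : Type*} [DecidableEq E] (tick : E) (Lm Lmi : Set (List E))
    (hLmi : Lmi ⊆ Lm) (N : ℕ) (hN : 0 < N) (K : Set (List E)) (hK : K ⊆ Lm) :
    BTComp tick Lmi N (⋃₀ {K' | K' ⊆ K ∧ BTComp tick Lmi N K'}) ∧
    (⋃₀ {K' | K' ⊆ K ∧ BTComp tick Lmi N K'}) ⊆ K ∧
    ∀ K', K' ⊆ K → BTComp tick Lmi N K' →
      K' ⊆ ⋃₀ {K' | K' ⊆ K ∧ BTComp tick Lmi N K'} := by
  classical
  set U := ⋃₀ {K' | K' ⊆ K ∧ BTComp tick Lmi N K'} with hUdef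
  refine ⟨?_, ?_, ?_⟩
  · intro s hs
    obtain ⟨w, hw⟩ := hs
    obtain ⟨K', hK'mem, hmem⟩ := hw
    obtain ⟨hK'K, hK'btc⟩ := hK'mem
    by_cases hsU : s ∈ U ∩ Lmi
    · constructor
      · exact ⟨[], by rw [Mset, if_pos hsU]; rfl⟩
      · intro t ht
        rw [Mset, if_pos hsU] at ht
        simp only [Set.mem_singleton_iff] at ht
        simp [ht]
    · have hsK' : s ∈ pclosure K' := ⟨w, hmem⟩
      have hsK'i : s ∉ K' ∩ Lmi := fun h => hsU ⟨⟨K', ⟨hK'K, hK'btc⟩, h.1⟩, h.2⟩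
      obtain ⟨⟨t1, ht1⟩, _⟩ := hK'btc s hsK'
      rw [Mset, if_neg hsK'i] at ht1
      have hUt1 : s ++ t1 ∈ U ∩ Lmi := ⟨⟨K', ⟨hK'K, hK'btc⟩, ht1.1.1⟩, ht1.1.2⟩
      constructor
      · obtain ⟨t0, _, hA, hmin⟩ := exists_min_prefix (U ∩ Lmi) s t1 hUt1
        exact ⟨t0, by rw [Mset, if_neg hsU]; exact ⟨hA, hmin⟩⟩
      · intro t ht
        rw [Mset, if_neg hsU] at ht
        obtain ⟨htU, htmin⟩ := ht
        obtain ⟨K'', hK''mem, htK''⟩ := htU.1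
        obtain ⟨hK''K, hK''btc⟩ := hK''mem
        have htK''i : s ++ t ∈ K'' ∩ Lmi := ⟨htK'', htU.2⟩
        obtain ⟨t0, hpre, hA, hmin⟩ := exists_min_prefix (K'' ∩ Lmi) s t htK''i
        have hsK'' : s ∈ pclosure K'' := ⟨t, htK''⟩
        have hsK''i : s ∉ K'' ∩ Lmi := fun h => hsU ⟨⟨K'', ⟨hK''K, hK''btc⟩, h.1⟩, h.2⟩
        have ht0M : t0 ∈ Mset (K'' ∩ Lmi) s := by
          rw [Mset, if_neg hsK''i]; exact ⟨hA, hmin⟩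
        have hbd := (hK''btc s hsK'').2 t0 ht0M
        have ht0U : s ++ t0 ∈ U ∩ Lmi := ⟨⟨K'', ⟨hK''K, hK''btc⟩, hA.1⟩, hA.2⟩
        have heq : t0 = t := by
          by_contra hne
          exact htmin t0 hpre hne ht0U
        rwa [heq] at hbd
  · intro x hx
    obtain ⟨K', ⟨hK'K, _⟩, hm⟩ := hx
    exact hK'K hm
  · intro K' h1 h2 x hx
    exact ⟨K', ⟨h1, h2⟩, hx⟩
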